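/- Suppose N : M → ℝ is a smooth function on a closed Riemannian manifold (M,g) solving the lapse equation (Δ_g − 1/3) N = N(|Σ|_g² + τ·η) − 1, where |Σ|_g² + τ·η ≥ 0 pointwise. Then 0 < N ≤ 3 everywhere on M. -/

import Mathlib

/-- Partial derivative of a function on the chart ℝ³ in the `i`-th coordinate
direction. -/
noncomputable def pder (i : Fin 3) (f : (Fin 3 → ℝ) → ℝ) (x : Fin 3 → ℝ) : ℝ :=
  fderiv ℝ f x (Pi.single i 1)

/-- Christoffel symbols of the metric `g` with given inverse `gInv`. -/
noncomputable def christoffel (g gInv : (Fin 3 → ℝ) → Matrix (Fin 3) (Fin 3) ℝ)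
    (x : Fin 3 → ℝ) (i j k : Fin 3) : ℝ :=
  (1/2) * ∑ ℓ, gInv x i ℓ *
    (pder j (fun y => g y k ℓ) x + pder k (fun y => g y ℓ j) x - pder ℓ (fun y => g y j k) x)

/-- The Laplace–Beltrami operator Δ_g = tr_g D² acting on a function. -/
noncomputable def laplacian (g gInv : (Fin 3 → ℝ) → Matrix (Fin 3) (Fin 3) ℝ)
    (N : (Fin 3 → ℝ) → ℝ) (x : Fin 3 → ℝ) : ℝ :=
  ∑ i, ∑ j, gInv x i j *
    (pder i (fun y => pder j N y) x - ∑ k, christoffel g gInv x k i j * pder k N x)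

lemma vec_eq_sum (v : Fin 3 → ℝ) : v = ∑ i, v i • (Pi.single i (1:ℝ) : Fin 3 → ℝ) := by
  funext j
  simp [Finset.sum_apply, Pi.single_apply]

lemma fderiv_apply_eq_sum {f : (Fin 3 → ℝ) → ℝ} {x : Fin 3 → ℝ}
    (v : Fin 3 → ℝ) : fderiv ℝ f x v = ∑ i, v i * pder i f x := by
  conv_lhs => rw [vec_eq_sum v]
  rw [map_sum]
  simp [pder, smul_eq_mul]

lemma pder_contDiff {f : (Fin 3 → ℝ) → ℝ} (hf : ContDiff ℝ (⊤ : ℕ∞) f) (j : Fin 3) :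
    ContDiff ℝ (⊤ : ℕ∞) (pder j f) := by
  exact (hf.fderiv_right (by simp)).clm_apply contDiff_const

lemma deriv2_nonpos {φ : ℝ → ℝ} (hφ : ContDiff ℝ (⊤ : ℕ∞) φ) (hmax : IsLocalMax φ 0) :
    deriv (deriv φ) 0 ≤ 0 := by
  by_contra h
  push_neg at h
  have hφ1 : ContDiff ℝ ((⊤:ℕ∞) : WithTop ℕ∞) (deriv φ) :=
    (contDiff_infty_iff_deriv.1 (hφ.of_le (by simp))).2
  have hd0 : deriv φ 0 = 0 := hmax.deriv_eq_zero
  have hdd : HasDerivAt (deriv φ) (deriv (deriv φ) 0) 0 :=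
    (hφ1.differentiable (by simp) 0).hasDerivAt
  have hslope := hasDerivAt_iff_tendsto_slope.1 hdd
  have hpos : ∀ᶠ t in nhdsWithin 0 (Set.Ioi 0), deriv φ t > 0 := by
    have h1 : ∀ᶠ t in nhdsWithin 0 {(0:ℝ)}ᶜ, slope (deriv φ) 0 t > 0 :=
      hslope.eventually (eventually_gt_nhds h)
    have h2 : ∀ᶠ t in nhdsWithin 0 (Set.Ioi 0), slope (deriv φ) 0 t > 0 :=
      h1.filter_mono (nhdsWithin_mono 0 (fun t ht => ne_of_gt ht))
    filter_upwards [h2, self_mem_nhdsWithin] with t ht ht0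
    have hts : slope (deriv φ) 0 t = deriv φ t / t := by
      simp [slope, hd0]; ring
    rw [hts] at ht
    have := mul_pos ht (Set.mem_Ioi.1 ht0)
    rwa [div_mul_cancel₀ _ (ne_of_gt (Set.mem_Ioi.1 ht0))] at this
  rw [eventually_nhdsWithin_iff, Metric.eventually_nhds_iff] at hpos
  obtain ⟨ε, hε, hεpos⟩ := hpos
  obtain ⟨δ, hδ, hδmax⟩ := Metric.eventually_nhds_iff.1 hmax
  set r := min ε δ / 2 with hr
  have hr0 : 0 < r := by positivity
  have hmono : StrictMonoOn φ (Set.Icc 0 r) := by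
    apply strictMonoOn_of_deriv_pos (convex_Icc 0 r)
      ((hφ.continuous).continuousOn)
    intro t ht
    rw [interior_Icc] at ht
    apply hεpos
    · rw [Real.dist_eq, sub_zero, abs_of_pos ht.1]
      calc t < r := ht.2
        _ ≤ ε / 2 := by rw [hr]; gcongr; exact min_le_left _ _
        _ < ε := by linarith
    · exact ht.1
  have h1 : φ 0 < φ r := hmono (Set.left_mem_Icc.2 hr0.le)
    (Set.right_mem_Icc.2 hr0.le) hr0
  have h2 : φ r ≤ φ 0 := by
    apply hδmax
    rw [Real.dist_eq, sub_zero, abs_of_pos hr0]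
    calc r ≤ δ / 2 := by rw [hr]; gcongr; exact min_le_right _ _
      _ < δ := by linarith
  linarith

lemma second_dir_max {f : (Fin 3 → ℝ) → ℝ} (hf : ContDiff ℝ (⊤ : ℕ∞) f) {x₀ : Fin 3 → ℝ}
    (hmax : IsLocalMax f x₀) (v : Fin 3 → ℝ) :
    ∑ i, ∑ j, v i * v j * pder i (pder j f) x₀ ≤ 0 := by
  set c : ℝ → (Fin 3 → ℝ) := fun t => x₀ + t • v with hcdef
  have hc : ContDiff ℝ (⊤ : ℕ∞) c := contDiff_const.add (contDiff_id.smul contDiff_const)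
  have hc0 : c 0 = x₀ := by simp [hcdef]
  have hct : ∀ t, HasDerivAt c v t := by
    intro t
    have := ((hasDerivAt_id t).smul_const v).const_add x₀
    simpa [hcdef] using this
  have hφ : ContDiff ℝ (⊤ : ℕ∞) (f ∘ c) := hf.comp hc
  have hmax0 : IsLocalMax (f ∘ c) 0 := by
    have htend : Filter.Tendsto c (nhds 0) (nhds x₀) := by
      rw [← hc0]; exact (hc.continuous).continuousAt
    have := htend.eventually hmax
    simpa [IsLocalMax, IsMaxFilter, hc0] using this
  have key := deriv2_nonpos hφ hmax0
  set F : (Fin 3 → ℝ) → ℝ := fun y => fderiv ℝ f y v with hFdef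
  have hF : ContDiff ℝ (⊤ : ℕ∞) F := (hf.fderiv_right (by simp)).clm_apply contDiff_const
  have hder : deriv (f ∘ c) = F ∘ c := by
    funext t
    exact ((hf.differentiable (by simp) (c t)).hasFDerivAt.comp_hasDerivAt t (hct t)).deriv
  have hder2 : deriv (deriv (f ∘ c)) 0 = fderiv ℝ F x₀ v := by
    rw [hder]
    have := ((hF.differentiable (by simp) (c 0)).hasFDerivAt.comp_hasDerivAt 0 (hct 0)).deriv
    rw [hc0] at this
    exact this
  rw [hder2] at key
  have hexp : fderiv ℝ F x₀ v = ∑ i, ∑ j, v i * v j * pder i (pder j f) x₀ := by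
    rw [fderiv_apply_eq_sum]
    apply Finset.sum_congr rfl
    intro i _
    have hFeq : F = fun y => ∑ j, v j * pder j f y := by
      funext y; exact fderiv_apply_eq_sum v
    have hpi : pder i F x₀ = ∑ j, v j * pder i (pder j f) x₀ := by
      rw [hFeq]
      show fderiv ℝ (fun y => ∑ j, v j * pder j f y) x₀ (Pi.single i 1)
        = ∑ j, v j * fderiv ℝ (pder j f) x₀ (Pi.single i 1)
      rw [fderiv_fun_sum (fun j _ =>
        (((pder_contDiff hf j).differentiable (by simp) x₀).const_mul (v j)))]
      simp only [ContinuousLinearMap.coe_sum', Finset.sum_apply]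
      apply Finset.sum_congr rfl
      intro j _
      rw [fderiv_const_mul ((pder_contDiff hf j).differentiable (by simp) x₀)]
      rfl
    rw [hpi, Finset.mul_sum]
    apply Finset.sum_congr rfl
    intro j _
    ring
  rw [hexp] at key
  exact key

lemma second_dir_min {f : (Fin 3 → ℝ) → ℝ} (hf : ContDiff ℝ (⊤ : ℕ∞) f) {x₀ : Fin 3 → ℝ}
    (hmin : IsLocalMin f x₀) (v : Fin 3 → ℝ) :
    0 ≤ ∑ i, ∑ j, v i * v j * pder i (pder j f) x₀ := by
  have h := second_dir_max (f := fun y => -f y) hf.neg hmin.neg v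
  have h2 : ∀ i j, pder i (pder j (fun y => -f y)) x₀ = - pder i (pder j f) x₀ := by
    intro i j
    have hpjn : pder j (fun y => -f y) = fun y => -(pder j f y) := by
      funext z
      show fderiv ℝ (fun y => -f y) z (Pi.single j 1) = _
      rw [fderiv_fun_neg]; rfl
    rw [hpjn]
    show fderiv ℝ (fun y => -(pder j f y)) x₀ (Pi.single i 1) = _
    rw [fderiv_fun_neg]; rfl
  simp only [h2, mul_neg, Finset.sum_neg_distrib] at h
  linarith

lemma matrix_quad_nonpos {A H : Matrix (Fin 3) (Fin 3) ℝ} (hA : A.PosSemidef)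
    (hH : ∀ v : Fin 3 → ℝ, ∑ i, ∑ j, v i * v j * H i j ≤ 0) :
    ∑ i, ∑ j, A i j * H i j ≤ 0 := by
  obtain ⟨B, hB⟩ : ∃ B : Matrix (Fin 3) (Fin 3) ℝ, A = B.conjTranspose * B := by
    open scoped MatrixOrder in
    obtain ⟨B, hB⟩ := CStarAlgebra.nonneg_iff_eq_star_mul_self.mp hA.nonneg
    exact ⟨B, hB⟩
  have hAij : ∀ i j, A i j = ∑ k, B k i * B k j := by
    intro i j
    rw [hB, Matrix.mul_apply]
    simp [Matrix.conjTranspose_apply]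
  calc ∑ i, ∑ j, A i j * H i j
      = ∑ i, ∑ j, ∑ k, B k i * B k j * H i j := by
        simp_rw [hAij, Finset.sum_mul]
    _ = ∑ i, ∑ k, ∑ j, B k i * B k j * H i j :=
        Finset.sum_congr rfl fun i _ => Finset.sum_comm
    _ = ∑ k, ∑ i, ∑ j, B k i * B k j * H i j := Finset.sum_comm
    _ ≤ 0 := Finset.sum_nonpos fun k _ => hH (fun i => B k i)

lemma matrix_quad_nonneg {A H : Matrix (Fin 3) (Fin 3) ℝ} (hA : A.PosSemidef)
    (hH : ∀ v : Fin 3 → ℝ, 0 ≤ ∑ i, ∑ j, v i * v j * H i j) :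
    0 ≤ ∑ i, ∑ j, A i j * H i j := by
  have h := matrix_quad_nonpos (H := -H) hA (fun v => by
    have := hH v
    simp only [Matrix.neg_apply, mul_neg, Finset.sum_neg_distrib]
    linarith)
  simp only [Matrix.neg_apply, mul_neg, Finset.sum_neg_distrib] at h
  linarith

lemma per_int {f : (Fin 3 → ℝ) → ℝ}
    (hper : ∀ x (i : Fin 3), f (x + Pi.single i 1) = f x)
    (x : Fin 3 → ℝ) (i : Fin 3) (k : ℤ) :
    f (x + k • (Pi.single i 1 : Fin 3 → ℝ)) = f x := by
  induction k using Int.induction_on with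
  | zero => simp
  | succ n ih =>
      have h1 : x + ((n:ℤ)+1) • (Pi.single i 1 : Fin 3 → ℝ)
          = (x + (n:ℤ) • (Pi.single i 1 : Fin 3 → ℝ)) + Pi.single i 1 := by
        rw [add_smul, one_smul]; abel
      rw [h1, hper, ih]
  | pred n ih =>
      have key : x + (-(n:ℤ)-1) • (Pi.single i 1 : Fin 3 → ℝ) + Pi.single i 1
          = x + (-(n:ℤ)) • (Pi.single i 1 : Fin 3 → ℝ) := by
        rw [sub_smul, one_smul]; abel
      have h2 := hper (x + (-(n:ℤ)-1) • (Pi.single i 1 : Fin 3 → ℝ)) i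
      rw [key] at h2
      rw [← h2, ih]

lemma exists_in_cube {f : (Fin 3 → ℝ) → ℝ}
    (hper : ∀ x (i : Fin 3), f (x + Pi.single i 1) = f x) (x : Fin 3 → ℝ) :
    ∃ y ∈ Set.Icc (0 : Fin 3 → ℝ) 1, f y = f x := by
  set y : Fin 3 → ℝ := fun i => Int.fract (x i) with hy
  refine ⟨y, ⟨fun i => Int.fract_nonneg _, fun i => (Int.fract_lt_one _).le⟩, ?_⟩
  have hx : x = y + ⌊x 2⌋ • (Pi.single 2 1 : Fin 3 → ℝ) + ⌊x 1⌋ • (Pi.single 1 1 : Fin 3 → ℝ)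
      + ⌊x 0⌋ • (Pi.single 0 1 : Fin 3 → ℝ) := by
    funext j
    fin_cases j <;>
      · simp [Pi.single_apply]
        simp [hy, Int.fract_add_floor]
  calc f y = f (y + ⌊x 2⌋ • (Pi.single 2 1 : Fin 3 → ℝ)) :=
        (per_int hper y 2 _).symm
    _ = f (y + ⌊x 2⌋ • (Pi.single 2 1 : Fin 3 → ℝ) + ⌊x 1⌋ • (Pi.single 1 1 : Fin 3 → ℝ)) :=
        (per_int hper _ 1 _).symm
    _ = f (y + ⌊x 2⌋ • (Pi.single 2 1 : Fin 3 → ℝ) + ⌊x 1⌋ • (Pi.single 1 1 : Fin 3 → ℝ)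
          + ⌊x 0⌋ • (Pi.single 0 1 : Fin 3 → ℝ)) := (per_int hper _ 0 _).symm
    _ = f x := by rw [← hx]

/-- Uniform positivity and upper bound 0 < N ≤ 3 for the lapse function solving
(Δ_g − 1/3)N = N(|Σ|² + τη) − 1 with nonnegative coefficient c = |Σ|² + τη, on a
closed Riemannian 3-manifold (modeled here as the flat torus chart: all data are
ℤ³-periodic).  (Lemma on uniform positivity of the lapse.) -/
theorem stmt_7 (g gInv : (Fin 3 → ℝ) → Matrix (Fin 3) (Fin 3) ℝ)
    (N c : (Fin 3 → ℝ) → ℝ)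
    (hg : ∀ i j, ContDiff ℝ (⊤ : ℕ∞) fun x => g x i j) (hN : ContDiff ℝ (⊤ : ℕ∞) N)
    (hc : Continuous c)
    (hgsymm : ∀ x, (g x).IsSymm) (hgpos : ∀ x, (g x).PosDef)
    (hgInv : ∀ x, g x * gInv x = 1) (hgInv' : ∀ x, gInv x * g x = 1)
    (hgper : ∀ x (i : Fin 3), g (x + Pi.single i 1) = g x)
    (hNper : ∀ x (i : Fin 3), N (x + Pi.single i 1) = N x)
    (hcper : ∀ x (i : Fin 3), c (x + Pi.single i 1) = c x)
    (hc0 : ∀ x, 0 ≤ c x)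
    (heq : ∀ x, laplacian g gInv N x - N x / 3 = N x * c x - 1) :
    ∀ x, 0 < N x ∧ N x ≤ 3 := by
  have hInvPSD : ∀ x, (gInv x).PosSemidef := by
    intro x
    have h1 : (g x)⁻¹ = gInv x := Matrix.inv_eq_right_inv (hgInv x)
    rw [← h1]
    exact ((hgpos x).inv).posSemidef
  have hNcont : Continuous N := hN.continuous
  have hne : (Set.Icc (0:Fin 3 → ℝ) 1).Nonempty := ⟨0, Set.left_mem_Icc.2 zero_le_one⟩
  obtain ⟨xM, _, hxM⟩ := isCompact_Icc.exists_isMaxOn hne hNcont.continuousOn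
  obtain ⟨xm, _, hxm⟩ := isCompact_Icc.exists_isMinOn hne hNcont.continuousOn
  have hgM : ∀ x, N x ≤ N xM := by
    intro x
    obtain ⟨y, hy, hyx⟩ := exists_in_cube hNper x
    rw [← hyx]; exact hxM hy
  have hgm : ∀ x, N xm ≤ N x := by
    intro x
    obtain ⟨y, hy, hyx⟩ := exists_in_cube hNper x
    rw [← hyx]; exact hxm hy
  have hlocM : IsLocalMax N xM := Filter.Eventually.of_forall hgM
  have hlocm : IsLocalMin N xm := Filter.Eventually.of_forall hgm
  have lapM : laplacian g gInv N xM = ∑ i, ∑ j, gInv xM i j * pder i (pder j N) xM := by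
    have h0 : ∀ k, pder k N xM = 0 := by
      intro k; simp [pder, hlocM.fderiv_eq_zero]
    unfold laplacian
    refine Finset.sum_congr rfl fun i _ => Finset.sum_congr rfl fun j _ => ?_
    simp [h0]
  have lapm : laplacian g gInv N xm = ∑ i, ∑ j, gInv xm i j * pder i (pder j N) xm := by
    have h0 : ∀ k, pder k N xm = 0 := by
      intro k; simp [pder, hlocm.fderiv_eq_zero]
    unfold laplacian
    refine Finset.sum_congr rfl fun i _ => Finset.sum_congr rfl fun j _ => ?_
    simp [h0]
  have hM0 : laplacian g gInv N xM ≤ 0 := by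
    rw [lapM]
    exact matrix_quad_nonpos (H := Matrix.of fun i j => pder i (pder j N) xM) (hInvPSD xM)
      (fun v => second_dir_max hN hlocM v)
  have hm0 : 0 ≤ laplacian g gInv N xm := by
    rw [lapm]
    exact matrix_quad_nonneg (H := Matrix.of fun i j => pder i (pder j N) xm) (hInvPSD xm)
      (fun v => second_dir_min hN hlocm v)
  have hMle : N xM ≤ 3 := by
    have h1 := heq xM
    have h2 := hc0 xM
    by_contra h
    push_neg at h
    nlinarith [mul_nonneg (by linarith : (0:ℝ) ≤ N xM) h2]
  have hmpos : 0 < N xm := by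
    have h1 := heq xm
    have h2 := hc0 xm
    by_contra h
    push_neg at h
    nlinarith [mul_nonpos_of_nonpos_of_nonneg h h2]
  intro x
  exact ⟨lt_of_lt_of_le hmpos (hgm x), le_trans (hgM x) hMle⟩
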